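/- arXiv:1301.3400 — 6 statements merged into one kernel-verified Lean document; each statement's English description precedes it below -/
import Mathlib

section
/- Let V be a finite set and G a group with a right action on V. A map φ : V → G is invertible in the monoid G^V with the twisted multiplication if and only if the map V → V given by v ↦ v · φ(v) is a bijection. -/
/-- The twisted multiplication on the set of maps `V → G`, where `G` is a group
with a right action `act` on `V`: `(φ₂ * φ₁)(v) = φ₂(v) · φ₁(v · φ₂(v))`. -/
def twMul {G V : Type*} [Group G] (act : V → G → V) (φ₂ φ₁ : V → G) : V → G :=
  fun v => φ₂ v * φ₁ (act v (φ₂ v))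

/-- For a finite set `V`, a map `φ : V → G` is invertible in the monoid `G^V`
with the twisted multiplication (whose identity is the constant map at `1`)
if and only if `v ↦ v · φ(v)` is a bijection of `V`. -/
theorem stmt_2 {G V : Type*} [Group G] [Finite V] (act : V → G → V)
    (act_one : ∀ v, act v 1 = v)
    (act_mul : ∀ v g h, act v (g * h) = act (act v g) h)
    (φ : V → G) :
    (∃ ψ : V → G, twMul act φ ψ = (fun _ => 1) ∧ twMul act ψ φ = (fun _ => 1)) ↔
      Function.Bijective (fun v => act v (φ v)) := by
  constructor
  · rintro ⟨ψ, h1, h2⟩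
    have h1' : ∀ v, φ v * ψ (act v (φ v)) = 1 := fun v => congrFun h1 v
    have h2' : ∀ v, ψ v * φ (act v (ψ v)) = 1 := fun v => congrFun h2 v
    refine Function.bijective_iff_has_inverse.2 ⟨fun v => act v (ψ v), ?_, ?_⟩
    · intro v
      simp only
      rw [← act_mul, h1' v, act_one]
    · intro v
      simp only
      rw [← act_mul, h2' v, act_one]
  · intro hb
    let e := Equiv.ofBijective _ hb
    refine ⟨fun v => (φ (e.symm v))⁻¹, ?_, ?_⟩
    · funext v
      have : e.symm (act v (φ v)) = v := e.symm_apply_apply v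
      simp [twMul, this]
    · funext v
      have hfix : act v (φ (e.symm v))⁻¹ = e.symm v := by
        have h : act (e.symm v) (φ (e.symm v)) = v := e.apply_symm_apply v
        calc act v (φ (e.symm v))⁻¹
            = act (act (e.symm v) (φ (e.symm v))) (φ (e.symm v))⁻¹ := by rw [h]
          _ = act (e.symm v) (φ (e.symm v) * (φ (e.symm v))⁻¹) := by rw [act_mul]
          _ = e.symm v := by rw [mul_inv_cancel, act_one]
      simp [twMul, hfix]
end

section
/- Let n ≥ 1 and let the group ℤ act on V = {1, …, n} on the right by v · m = τ^m(v), where τ is the cyclic permutation sending k to k − 1 mod n (so τ(1) = n). A vector (a₁, …, aₙ) ∈ ℤ^n is invertible in the monoid ℤ^V with the twisted multiplication if and only if the residues of i − a_i modulo n, for i = 1, …, n, are pairwise distinct. -/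
/-!
Everything is governed by the map `shiftBy τ a : v ↦ v · a(v)`. An equation `φ₂ * φ₁ = 0` says
`φ₁(v · φ₂(v)) = -φ₂(v)`, so a right inverse of `a` forces this map to be injective (one recovers
`v` from `v · a(v)` since `a(v)` is determined by it) and a left inverse forces it to be
surjective; conversely, if it is a bijection then `-a ∘ (v ↦ v · a(v))⁻¹` is a two-sided inverse.
For `τ : k ↦ k - 1` the map sends `i` to `i - aᵢ mod n`, and on the finite set `V` injectivity
is bijectivity.
-/

/-- The twisted multiplication on maps `V → ℤ`, where `ℤ` acts on the right on `V`
via a permutation `τ` by `v · m = τ^m(v)`: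
`(φ₂ * φ₁)(v) = φ₂(v) + φ₁(τ^{φ₂(v)}(v))`. -/
def twAdd {V : Type*} (τ : Equiv.Perm V) (φ₂ φ₁ : V → ℤ) : V → ℤ :=
  fun v => φ₂ v + φ₁ ((τ ^ (φ₂ v)) v)

open Function Equiv

section
variable {V : Type*}

def shiftBy (τ : Perm V) (φ : V → ℤ) (v : V) : V := (τ ^ φ v) v

variable {τ : Perm V}

lemma zpow_neg_apply_zpow_apply (k : ℤ) (v : V) : (τ ^ (-k)) ((τ ^ k) v) = v := by
  simp only [zpow_neg, Perm.coe_inv, symm_apply_apply]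

lemma shiftBy_injective_of_twAdd_eq_zero {a ψ : V → ℤ} (h : twAdd τ a ψ = fun _ => 0) :
    Injective (shiftBy τ a) := by
  have ha : ∀ v, a v = -ψ (shiftBy τ a v) := fun v => eq_neg_of_add_eq_zero_left (congrFun h v)
  intro v w hvw
  have haw : a v = a w := by rw [ha v, ha w, hvw]
  calc v = (τ ^ (-a v)) (shiftBy τ a v) := (zpow_neg_apply_zpow_apply _ v).symm
    _ = (τ ^ (-a w)) (shiftBy τ a w) := by rw [hvw, haw]
    _ = w := zpow_neg_apply_zpow_apply _ w

lemma shiftBy_surjective_of_twAdd_eq_zero {a ψ : V → ℤ} (h : twAdd τ ψ a = fun _ => 0) :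
    Surjective (shiftBy τ a) := by
  intro u
  have hψ : a (shiftBy τ ψ u) = -ψ u := eq_neg_of_add_eq_zero_right (congrFun h u)
  refine ⟨shiftBy τ ψ u, ?_⟩
  rw [shiftBy, hψ, shiftBy, zpow_neg_apply_zpow_apply]

theorem exists_twAdd_inverse_iff_bijective_shiftBy (a : V → ℤ) :
    (∃ ψ, twAdd τ a ψ = (fun _ => 0) ∧ twAdd τ ψ a = (fun _ => 0)) ↔
      Bijective (shiftBy τ a) := by
  refine ⟨fun ⟨ψ, hr, hl⟩ => ⟨shiftBy_injective_of_twAdd_eq_zero hr,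
    shiftBy_surjective_of_twAdd_eq_zero hl⟩, fun hbij => ?_⟩
  set e := Equiv.ofBijective _ hbij
  refine ⟨fun u => -a (e.symm u), funext fun v => ?_, funext fun u => ?_⟩
  · change a v + -a (e.symm (e v)) = 0
    rw [e.symm_apply_apply, add_neg_cancel]
  · obtain ⟨w, rfl⟩ := e.surjective u
    change -a (e.symm (e w)) + a ((τ ^ (-a (e.symm (e w)))) ((τ ^ a w) w)) = 0
    rw [e.symm_apply_apply, zpow_neg_apply_zpow_apply, neg_add_cancel]

end

lemma natCast_finRotate {n : ℕ} (v : Fin n) : ((finRotate n v : ℕ) : ZMod n) = v + 1 := by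
  obtain _ | m := n
  · exact v.elim0
  · rw [finRotate_apply, Fin.val_add_one]
    split_ifs with h
    · rw [h]; simp
    · push_cast; rfl

lemma natCast_zpow_finRotate_symm {n : ℕ} (k : ℤ) (v : Fin n) :
    ((((finRotate n).symm ^ k) v : ℕ) : ZMod n) = v - k := by
  induction k using Int.induction_on generalizing v with
  | zero => simp
  | succ k ih =>
    have hv : (((finRotate n).symm v : ℕ) : ZMod n) = v - 1 := by
      rw [eq_sub_iff_add_eq, ← natCast_finRotate, apply_symm_apply]
    rw [zpow_add_one, Perm.mul_apply, ih, hv]; push_cast; ring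
  | pred k ih =>
    rw [zpow_sub_one, Perm.mul_apply, ih, Perm.inv_def, symm_symm, natCast_finRotate]
    push_cast; ring

lemma natCast_fin_injective (n : ℕ) : Injective (fun v : Fin n => ((v : ℕ) : ZMod n)) := by
  intro v w h
  simp only [ZMod.natCast_eq_natCast_iff', Nat.mod_eq_of_lt v.isLt, Nat.mod_eq_of_lt w.isLt] at h
  exact Fin.ext h

theorem stmt_3_general (n : ℕ) (a : Fin n → ℤ) :
    (∃ ψ : Fin n → ℤ,
        twAdd (finRotate n).symm a ψ = (fun _ => 0) ∧
        twAdd (finRotate n).symm ψ a = (fun _ => 0)) ↔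
      Function.Injective (fun i : Fin n => ((((i : ℕ) : ℤ) - a i : ℤ) : ZMod n)) := by
  have hcomp : (fun i : Fin n => ((((i : ℕ) : ℤ) - a i : ℤ) : ZMod n)) =
      (fun v : Fin n => ((v : ℕ) : ZMod n)) ∘ shiftBy (finRotate n).symm a := by
    funext i
    simp only [comp_apply, shiftBy, natCast_zpow_finRotate_symm]
    push_cast; rfl
  rw [exists_twAdd_inverse_iff_bijective_shiftBy, ← Finite.injective_iff_bijective, hcomp,
    (natCast_fin_injective n).of_comp_iff]

/-- For `V = {1, …, n}` (modelled as `Fin n`) with the right `ℤ`-action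
`v · m = τ^m(v)`, where `τ` is the cyclic permutation `k ↦ k - 1 (mod n)`
(i.e. `(finRotate n).symm`), a vector `(a₁, …, aₙ) ∈ ℤ^n` is invertible in the
monoid `ℤ^V` with the twisted multiplication (whose identity is the zero vector)
if and only if the residues of `i - aᵢ` modulo `n` are pairwise distinct. -/
theorem stmt_3 (n : ℕ) (hn : 1 ≤ n) (a : Fin n → ℤ) :
    (∃ ψ : Fin n → ℤ,
        twAdd (finRotate n).symm a ψ = (fun _ => 0) ∧
        twAdd (finRotate n).symm ψ a = (fun _ => 0)) ↔
      Function.Injective (fun i : Fin n => ((((i : ℕ) : ℤ) - a i : ℤ) : ZMod n)) :=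
  stmt_3_general n a
end

section
/- Let n ≥ 1 and let 𝔄ₙ be the group of invertible elements of the monoid ℤ^V (V = {1, …, n}) with the twisted multiplication determined by the cyclic permutation τ(k) = k − 1 mod n. Then 𝔄ₙ is isomorphic to the semidirect product ℤⁿ ⋊ Sₙ, where the symmetric group Sₙ acts on ℤⁿ by permuting coordinates. -/
/-- `TwFun n` is the set of maps `{1, …, n} → ℤ` (i.e. the lattice `ℤⁿ`),
to be equipped with the twisted multiplication coming from the right `ℤ`-action
on `Fin n` determined by the cyclic permutation `τ = (finRotate n).symm`
(`τ(k) = k - 1 mod n`). -/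
def TwFun (n : ℕ) := Fin n → ℤ

theorem TwFun.key {V : Type*} (τ : Equiv.Perm V) (x y : ℤ) (v : V) :
    (τ ^ (x + y)) v = (τ ^ y) ((τ ^ x) v) := by
  rw [add_comm, zpow_add, Equiv.Perm.mul_apply]

/-- The twisted multiplication `(φ₂ * φ₁)(v) = φ₂(v) + φ₁(v · φ₂(v))`, where
`v · m = τ^m(v)` with `τ(k) = k - 1 mod n`, makes `ℤ^V` a monoid. -/
instance TwFun.instMonoid (n : ℕ) : Monoid (TwFun n) where
  mul a b := fun v => a v + b (((finRotate n).symm ^ (a v)) v)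
  one := fun _ => 0
  mul_assoc a b c := by
    funext v
    show (a v + b _) + c (((finRotate n).symm ^ (a v + b _)) v)
        = a v + (b _ + c _)
    rw [TwFun.key, add_assoc]
  one_mul a := by
    funext v
    show (0 : ℤ) + a (((finRotate n).symm ^ (0 : ℤ)) v) = a v
    simp
  mul_one a := by
    funext v
    show a v + (0 : ℤ) = a v
    simp

/-- The automorphism of `ℤ^α` (written multiplicatively) given by permuting
coordinates by `s`. -/
def permMulAut {α : Type*} (s : Equiv.Perm α) : MulAut (Multiplicative (α → ℤ)) where
  toFun z := Multiplicative.ofAdd (Multiplicative.toAdd z ∘ ⇑s.symm)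
  invFun z := Multiplicative.ofAdd (Multiplicative.toAdd z ∘ ⇑s)
  left_inv z := by
    simp [Function.comp_def]
  right_inv z := by
    simp [Function.comp_def]
  map_mul' z₁ z₂ := rfl

/-- The action of the symmetric group on `ℤ^α` by permuting coordinates,
as a homomorphism to the automorphism group. -/
def permHom (α : Type*) : Equiv.Perm α →* MulAut (Multiplicative (α → ℤ)) where
  toFun := permMulAut
  map_one' := by
    ext z
    rfl
  map_mul' s t := by
    ext z
    rfl

/-!
For `a ∈ ℤ^V` let `move a v = v · a(v)`. Then `move (a * b) = move b ∘ move a`, so `move u`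
is a permutation for every unit `u`. Since `v · m = v - m mod n`, `a(v) ≡ v - move a v (mod n)`,
and a unit is determined by the permutation `move u` together with the quotients
`(u(v) - v + move u v) / n`. This makes `(z, σ) ↦ (v ↦ v - σ⁻¹ v + n z(v))` an isomorphism
`ℤⁿ ⋊ Sₙ ≃* 𝔄ₙ`.
-/

namespace TwFun

open Equiv

variable {n : ℕ}

theorem mul_apply (a b : TwFun n) (v : Fin n) :
    (a * b) v = a v + b (((finRotate n).symm ^ a v) v) := rfl

theorem one_apply (v : Fin n) : (1 : TwFun n) v = 0 := rfl

open Fin.CommRing in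
theorem val_zpow_finRotate_symm_apply (k : ℤ) (v : Fin n) :
    ((((finRotate n).symm ^ k) v : Fin n) : ℤ) = ((v : ℤ) - k) % n := by
  have := v.neZero
  have hfin : ((finRotate n).symm ^ k) v = (((v : ℤ) - k : ℤ) : Fin n) := by
    induction k using Int.induction_on with
    | zero => simp
    | succ k ih =>
      rw [add_comm, zpow_add, zpow_one, Perm.mul_apply, ih, finRotate_symm_apply]
      push_cast
      ring
    | pred k ih =>
      rw [sub_eq_neg_add, zpow_add, zpow_neg_one, Perm.mul_apply, ih, Perm.inv_def, symm_symm,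
        finRotate_apply]
      push_cast
      ring
  rw [hfin, Fin.val_intCast, Int.toNat_of_nonneg (Int.emod_nonneg _ (by exact_mod_cast this.ne))]

theorem zpow_finRotate_symm_apply_sub_add_mul (v w : Fin n) (t : ℤ) :
    ((finRotate n).symm ^ ((v : ℤ) - w + n * t)) v = w := by
  apply Fin.ext
  apply Nat.cast_injective (R := ℤ)
  rw [val_zpow_finRotate_symm_apply, show (v : ℤ) - (v - w + n * t) = w + n * -t by ring,
    Int.add_mul_emod_self_left]
  exact Int.emod_eq_of_lt (by positivity) (by exact_mod_cast w.isLt)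

/-- The map `v ↦ v · a(v)`. -/
def move (a : TwFun n) (v : Fin n) : Fin n := ((finRotate n).symm ^ a v) v

theorem dvd_move_sub_add (a : TwFun n) (v : Fin n) : (n : ℤ) ∣ (move a v : ℤ) - v + a v := by
  rw [move, val_zpow_finRotate_symm_apply, sub_add]
  exact (Int.mod_modEq _ _).symm.dvd

theorem move_mul (a b : TwFun n) : move (a * b) = move b ∘ move a :=
  funext fun v => TwFun.key _ _ _ v

theorem move_one : move (1 : TwFun n) = id :=
  funext fun _ => by simp [move, one_apply]

def movePerm (u : (TwFun n)ˣ) : Perm (Fin n) where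
  toFun := move u
  invFun := move ↑u⁻¹
  left_inv v := by
    rw [← Function.comp_apply (f := move _), ← move_mul, u.mul_inv, move_one, id]
  right_inv v := by
    rw [← Function.comp_apply (f := move _), ← move_mul, u.inv_mul, move_one, id]

theorem movePerm_apply (u : (TwFun n)ˣ) (v : Fin n) :
    movePerm u v = move u v := rfl

variable (n) in
/-- `(z, σ) ↦ (v ↦ v - σ⁻¹ v + n z(v))`, where `v - σ⁻¹ v` is computed on the representatives
`0, …, n - 1`, so that `v · (v - σ⁻¹ v + n z(v)) = σ⁻¹ v`. -/
def ofSemidirectProduct :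
    Multiplicative (Fin n → ℤ) ⋊[permHom (Fin n)] Perm (Fin n) →* TwFun n where
  toFun p v := (v : ℤ) - (p.right⁻¹ v : ℤ) + n * p.left.toAdd v
  map_one' := by
    funext v
    simp [one_apply]
  map_mul' p q := by
    funext v
    have hleft : (p * q).left.toAdd v = p.left.toAdd v + q.left.toAdd (p.right⁻¹ v) := rfl
    erw [mul_apply]
    rw [zpow_finRotate_symm_apply_sub_add_mul, hleft, SemidirectProduct.mul_right,
      mul_inv_rev, Perm.mul_apply]
    ring

theorem ofSemidirectProduct_apply
    (p : Multiplicative (Fin n → ℤ) ⋊[permHom (Fin n)] Perm (Fin n)) (v : Fin n) :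
    ofSemidirectProduct n p v = (v : ℤ) - (p.right⁻¹ v : ℤ) + n * p.left.toAdd v := rfl

theorem move_ofSemidirectProduct
    (p : Multiplicative (Fin n → ℤ) ⋊[permHom (Fin n)] Perm (Fin n)) :
    move (ofSemidirectProduct n p) = ⇑p.right⁻¹ :=
  funext fun v => zpow_finRotate_symm_apply_sub_add_mul v _ _

theorem ofSemidirectProduct_injective : Function.Injective (ofSemidirectProduct n) := by
  intro p q hpq
  have hright : p.right = q.right := by
    have hmove := congrArg move hpq
    rwa [move_ofSemidirectProduct, move_ofSemidirectProduct, DFunLike.coe_fn_eq, inv_inj] at hmove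
  have hleft : p.left = q.left := by
    funext v
    have hv := congrFun hpq v
    rw [ofSemidirectProduct_apply, ofSemidirectProduct_apply, hright] at hv
    exact mul_left_cancel₀ (by exact_mod_cast v.neZero.ne) (add_left_cancel hv)
  exact SemidirectProduct.ext hleft hright

theorem exists_ofSemidirectProduct_eq (u : (TwFun n)ˣ) :
    ∃ p, ofSemidirectProduct n p = u := by
  refine ⟨⟨.ofAdd fun v => ((movePerm u v : ℤ) - v + (u : TwFun n) v) / n, (movePerm u)⁻¹⟩, ?_⟩
  funext v
  rw [ofSemidirectProduct_apply, inv_inv, toAdd_ofAdd, movePerm_apply,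
    Int.mul_ediv_cancel' (dvd_move_sub_add _ _)]
  ring

end TwFun

theorem stmt_4_general (n : ℕ) :
    Nonempty ((TwFun n)ˣ ≃*
      Multiplicative (Fin n → ℤ) ⋊[permHom (Fin n)] Equiv.Perm (Fin n)) :=
  ⟨(MulEquiv.ofBijective (TwFun.ofSemidirectProduct n).toHomUnits
    ⟨fun _ _ h => TwFun.ofSemidirectProduct_injective (congrArg Units.val h),
      fun u => (TwFun.exists_ofSemidirectProduct_eq u).imp
        fun _ h => Units.ext h⟩).symm⟩

/-- The group `𝔄ₙ` of invertible elements of the monoid `ℤ^V` (`V = {1, …, n}`)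
with the twisted multiplication determined by the cyclic permutation
`τ(k) = k - 1 mod n` is isomorphic to the semidirect product `ℤⁿ ⋊ Sₙ`,
where `Sₙ` acts on `ℤⁿ` by permuting coordinates. -/
theorem stmt_4 (n : ℕ) (hn : 1 ≤ n) :
    Nonempty ((TwFun n)ˣ ≃*
      Multiplicative (Fin n → ℤ) ⋊[permHom (Fin n)] Equiv.Perm (Fin n)) :=
  stmt_4_general n
end

section
/- Let n ≥ 4 and let G be any group containing elements σ, τ satisfying σ² = e, (στστ⁻¹)³ = e, (στ^m σ τ^{−m})² = e for 2 ≤ m ≤ n − 2, and (στ)^{n−1} = τⁿ. Then τⁿ = e. -/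
/-!
Put `sᵢ = τⁱ σ τ⁻ⁱ`: these are involutions, `sᵢ` and `sⱼ` commute for `2 ≤ j - i ≤ n - 2`, and
`(στ)ᵏ = s₀ ⋯ sₖ₋₁ τᵏ`, so the last relation says `τ = s₀ ⋯ s_{n-2}`. Conjugating by `τ` gives
`τ = sₐ ⋯ s_{a+n-2}` for every `a`, hence `s_{a+n} = sₐ`.

As for a Coxeter element of `Sₙ`, `τᵏ` is then, for `k ≤ n`, the product of the `k` blocks
`sⱼ ⋯ s_{j+n-k-1}` with `j = k-1, …, 0`. For the induction step multiply by `τ` on the left, which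
shifts every block, and move the last letter of each block to the right past the later blocks: those
letters form the inverse of a block, which `τ` absorbs by periodicity. For `k = n` all blocks are
empty.
-/

theorem List.prod_map_mul_of_pairwise_commute {ι M : Type*} [Monoid M] {f g : ι → M}
    {l : List ι} (h : l.Pairwise fun i j => Commute (g i) (f j)) :
    (l.map fun i => f i * g i).prod = (l.map f).prod * (l.map g).prod := by
  induction l with
  | nil => simp
  | cons a l ih =>
    obtain ⟨ha, hl⟩ := List.pairwise_cons.1 h
    have hga : Commute (g a) (l.map f).prod :=
      Commute.list_prod_right _ _ (by simpa using ha)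
    simp only [List.map_cons, List.prod_cons, ih hl, mul_assoc, hga.left_comm]

theorem Commute.of_sq_eq_one {G : Type*} [Group G] {a b : G} (ha : a ^ 2 = 1) (hb : b ^ 2 = 1)
    (hab : (a * b) ^ 2 = 1) : Commute a b := by
  rw [sq, mul_eq_one_iff_eq_inv] at ha hb hab
  rw [Commute, SemiconjBy, hab, mul_inv_rev, ← ha, ← hb]

namespace CoxeterRotation

variable {G : Type*} [Group G] (σ τ : G)

def gen (i : ℕ) : G := τ ^ i * σ * (τ ^ i)⁻¹

def block (a l : ℕ) : G := ((List.range l).map fun i => gen σ τ (a + i)).prod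

lemma gen_zero : gen σ τ 0 = σ := by simp [gen]

lemma gen_add (i j : ℕ) : gen σ τ (i + j) = MulAut.conj (τ ^ i) (gen σ τ j) := by
  simp only [gen, MulAut.conj_apply, pow_add]
  group

lemma gen_succ (i : ℕ) : gen σ τ (i + 1) = MulAut.conj τ (gen σ τ i) := by
  rw [add_comm, gen_add, pow_one]

lemma gen_sq {σ : G} (hσ : σ ^ 2 = 1) (i : ℕ) : gen σ τ i ^ 2 = 1 := by
  rw [← add_zero i, gen_add, gen_zero, ← map_pow, hσ, map_one]

lemma gen_inv {σ : G} (hσ : σ ^ 2 = 1) (i : ℕ) : (gen σ τ i)⁻¹ = gen σ τ i :=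
  inv_eq_of_mul_eq_one_right (by rw [← sq, gen_sq τ hσ])

lemma commute_gen_add {σ : G} (hσ : σ ^ 2 = 1) {d : ℕ}
    (hd : (σ * τ ^ d * σ * (τ ^ d)⁻¹) ^ 2 = 1) (i : ℕ) :
    Commute (gen σ τ i) (gen σ τ (i + d)) := by
  have h0 : Commute σ (gen σ τ d) :=
    .of_sq_eq_one hσ (gen_sq τ hσ d) (by simpa only [gen, mul_assoc] using hd)
  rw [← add_zero i, gen_add, add_zero, gen_add, gen_zero]
  exact h0.map _

lemma block_zero_right (a : ℕ) : block σ τ a 0 = 1 := rfl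

lemma block_add (a l m : ℕ) : block σ τ a (l + m) = block σ τ a l * block σ τ (a + l) m := by
  simp [block, List.range_add, Function.comp_def, add_assoc]

lemma block_one (a : ℕ) : block σ τ a 1 = gen σ τ a := by simp [block]

lemma conj_block (a l : ℕ) : MulAut.conj τ (block σ τ a l) = block σ τ (a + 1) l := by
  simp only [block, map_list_prod, List.map_map]
  congr 1
  refine List.map_congr_left fun i _ => ?_
  rw [Function.comp_apply, add_right_comm, gen_succ]

lemma mul_block (a l : ℕ) : τ * block σ τ a l = block σ τ (a + 1) l * τ := by
  rw [← conj_block, MulAut.conj_apply, inv_mul_cancel_right]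

lemma mul_pow_eq_block_mul_pow (k : ℕ) : (σ * τ) ^ k = block σ τ 0 k * τ ^ k := by
  induction k with
  | zero => simp [block_zero_right]
  | succ k ih =>
    rw [pow_succ, ih, block_add, block_one, zero_add, gen, mul_assoc, pow_succ]
    group

lemma block_inv {σ : G} (hσ : σ ^ 2 = 1) (a l : ℕ) :
    (block σ τ a l)⁻¹ = ((List.range l).reverse.map fun i => gen σ τ (a + i)).prod := by
  simp only [block, List.prod_inv_reverse, List.map_map, List.map_reverse, Function.comp_def,
    gen_inv τ hσ]

lemma mul_prod_blocks (L : List ℕ) (l : ℕ) :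
    τ * (L.map fun j => block σ τ j l).prod = (L.map fun j => block σ τ (j + 1) l).prod * τ := by
  have h : MulAut.conj τ (L.map fun j => block σ τ j l).prod =
      (L.map fun j => block σ τ (j + 1) l).prod := by
    simp only [map_list_prod, List.map_map, Function.comp_def, conj_block]
  rw [← h, MulAut.conj_apply, inv_mul_cancel_right]

variable {σ τ} {n : ℕ}

lemma block_zero_pred_eq (hn : 0 < n) (h : (σ * τ) ^ (n - 1) = τ ^ n) :
    block σ τ 0 (n - 1) = τ := by
  rw [mul_pow_eq_block_mul_pow, ← Nat.sub_add_cancel hn, pow_succ'] at h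
  exact mul_right_cancel h

lemma block_pred_eq (hτ : block σ τ 0 (n - 1) = τ) (a : ℕ) : block σ τ a (n - 1) = τ := by
  induction a with
  | zero => exact hτ
  | succ a ih => rw [← conj_block, ih, MulAut.conj_apply, mul_inv_cancel_right]

lemma gen_add_period (hn : 0 < n) (hτ : ∀ a, block σ τ a (n - 1) = τ) (a : ℕ) :
    gen σ τ (a + n) = gen σ τ a := by
  refine mul_right_cancel (b := τ) ?_
  calc gen σ τ (a + n) * τ = τ * block σ τ (a + (n - 1)) 1 := by
        rw [mul_block, block_one, add_assoc, Nat.sub_add_cancel hn]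
    _ = block σ τ a (1 + (n - 1)) := by rw [add_comm 1, block_add, hτ]
    _ = gen σ τ a * τ := by rw [block_add, block_one, hτ]

lemma block_add_period (hn : 0 < n) (hτ : ∀ a, block σ τ a (n - 1) = τ) (a l : ℕ) :
    block σ τ (a + n) l = block σ τ a l := by
  simp only [block, add_right_comm a n, gen_add_period hn hτ]

lemma block_mul_block (hn : 0 < n) (hτ : ∀ a, block σ τ a (n - 1) = τ) {k m : ℕ}
    (h : k + m + 1 = n) (a : ℕ) : block σ τ (a + m + 1) k * block σ τ a m = τ := by
  calc block σ τ (a + m + 1) k * block σ τ a m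
      = block σ τ (a + m + 1) k * block σ τ (a + m + 1 + k) m := by
        rw [← block_add_period hn hτ a, show a + n = a + m + 1 + k by omega]
    _ = τ := by rw [← block_add, show k + m = n - 1 by omega, hτ]

lemma commute_gen_block (hcomm : ∀ i j, i + 2 ≤ j → j + 2 ≤ i + n →
    Commute (gen σ τ i) (gen σ τ j)) {a l c : ℕ} (h₁ : a + l + 1 ≤ c) (h₂ : c + 2 ≤ a + n) :
    Commute (gen σ τ c) (block σ τ a l) := by
  refine Commute.list_prod_right _ _ fun x hx => ?_
  obtain ⟨i, hi, rfl⟩ := List.mem_map.1 hx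
  have := List.mem_range.1 hi
  exact (hcomm _ _ (by omega) (by omega)).symm

lemma pow_eq_prod_blocks (hσ : σ ^ 2 = 1) (hcomm : ∀ i j, i + 2 ≤ j → j + 2 ≤ i + n →
    Commute (gen σ τ i) (gen σ τ j)) (hn : 0 < n) (hτ : ∀ a, block σ τ a (n - 1) = τ)
    {k : ℕ} (hk : k ≤ n) :
    τ ^ k = ((List.range k).reverse.map fun j => block σ τ j (n - k)).prod := by
  induction k with
  | zero => simp
  | succ k ih =>
    obtain ⟨m, hm⟩ : ∃ m, n - k = m + 1 := ⟨n - (k + 1), by omega⟩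
    have hpair : (List.range k).reverse.Pairwise fun i j =>
        Commute (gen σ τ (m + 1 + i)) (block σ τ (j + 1) m) := by
      refine List.pairwise_reverse.2 (List.pairwise_lt_range.imp_of_mem fun _ hj hij => ?_)
      have := List.mem_range.1 hj
      exact commute_gen_block hcomm (by omega) (by omega)
    rw [show n - (k + 1) = m by omega]
    calc τ ^ (k + 1) = τ * ((List.range k).reverse.map fun j => block σ τ j (m + 1)).prod := by
          rw [pow_succ', ih (by omega), hm]
      _ = ((List.range k).reverse.map fun j =>
            block σ τ (j + 1) m * gen σ τ (m + 1 + j)).prod * τ := by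
          rw [mul_prod_blocks]
          congr 3 with j
          rw [block_add, block_one, show j + 1 + m = m + 1 + j by omega]
      _ = ((List.range k).reverse.map fun j => block σ τ (j + 1) m).prod *
            ((block σ τ (m + 1) k)⁻¹ * τ) := by
          rw [List.prod_map_mul_of_pairwise_commute hpair, block_inv τ hσ, mul_assoc]
      _ = ((List.range (k + 1)).reverse.map fun j => block σ τ j m).prod := by
          have hrot := block_mul_block hn hτ (k := k) (m := m) (by omega) 0
          rw [zero_add] at hrot
          rw [inv_mul_eq_of_eq_mul hrot.symm, List.range_succ_eq_map]
          simp [Function.comp_def]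

lemma pow_eq_one (hσ : σ ^ 2 = 1) (hcomm : ∀ i j, i + 2 ≤ j → j + 2 ≤ i + n →
    Commute (gen σ τ i) (gen σ τ j)) (hn : 0 < n) (hτ : block σ τ 0 (n - 1) = τ) :
    τ ^ n = 1 := by
  rw [pow_eq_prod_blocks hσ hcomm hn (block_pred_eq hτ) le_rfl, Nat.sub_self]
  simp [block_zero_right]

end CoxeterRotation

theorem stmt_6_general {G : Type*} [Group G] (n : ℕ) (σ τ : G)
    (h1 : σ ^ 2 = 1)
    (h3 : ∀ m : ℕ, 2 ≤ m → m ≤ n - 2 → (σ * τ ^ m * σ * (τ ^ m)⁻¹) ^ 2 = 1)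
    (h4 : (σ * τ) ^ (n - 1) = τ ^ n) :
    τ ^ n = 1 := by
  open CoxeterRotation in
  rcases Nat.eq_zero_or_pos n with rfl | hn
  · exact pow_zero τ
  refine pow_eq_one h1 (fun i j hij _ => ?_) hn (block_zero_pred_eq hn h4)
  obtain ⟨d, rfl⟩ := Nat.exists_eq_add_of_le hij
  simpa only [add_assoc] using commute_gen_add τ h1 (h3 (2 + d) (by omega) (by omega)) i

/-- Let `n ≥ 4` and let `G` be any group containing elements `σ, τ` satisfying
`σ² = e`, `(στστ⁻¹)³ = e`, `(στ^m στ^{-m})² = e` for `2 ≤ m ≤ n - 2`, and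
`(στ)^{n-1} = τⁿ`. Then `τⁿ = e`. -/
theorem stmt_6 {G : Type*} [Group G] (n : ℕ) (hn : 4 ≤ n) (σ τ : G)
    (h1 : σ ^ 2 = 1)
    (h2 : (σ * τ * σ * τ⁻¹) ^ 3 = 1)
    (h3 : ∀ m : ℕ, 2 ≤ m → m ≤ n - 2 → (σ * τ ^ m * σ * (τ ^ m)⁻¹) ^ 2 = 1)
    (h4 : (σ * τ) ^ (n - 1) = τ ^ n) :
    τ ^ n = 1 :=
  stmt_6_general n σ τ h1 h3 h4
end

section
/- Let n ≥ 4 and let G be any group containing elements a, b satisfying b² = e and (b a^m b a^{−m})² = e for all 2 ≤ m ≤ n − 2. Then for every k with 2 ≤ k ≤ n − 2 the identity (a⁻¹b)^{n−k} a^{n−k} b a⁻¹ = a⁻¹ b a b a⁻² b (a⁻¹b)^{n−k−2} a^{n−k−1} holds in G. -/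
/-- Let `n ≥ 4` and let `G` be any group containing elements `a, b` satisfying
`b² = e` and `(b a^m b a^{-m})² = e` for all `2 ≤ m ≤ n - 2`. Then for every
`k` with `2 ≤ k ≤ n - 2` the identity
`(a⁻¹b)^{n-k} a^{n-k} b a⁻¹ = a⁻¹ b a b a⁻² b (a⁻¹b)^{n-k-2} a^{n-k-1}`
holds in `G`. -/
theorem stmt_10 {G : Type*} [Group G] (n : ℕ) (hn : 4 ≤ n) (a b : G)
    (hb : b ^ 2 = 1)
    (hm : ∀ m : ℕ, 2 ≤ m → m ≤ n - 2 → (b * a ^ m * b * (a ^ m)⁻¹) ^ 2 = 1) :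
    ∀ k : ℕ, 2 ≤ k → k ≤ n - 2 →
      (a⁻¹ * b) ^ (n - k) * a ^ (n - k) * b * a⁻¹ =
        a⁻¹ * b * a * b * (a ^ 2)⁻¹ * b * (a⁻¹ * b) ^ (n - k - 2) * a ^ (n - k - 1) := by
  have hb2 : b * b = 1 := by rw [← pow_two]; exact hb
  -- b commutes with a^m b a^{-m}
  have hbm : ∀ m : ℕ, 2 ≤ m → m ≤ n - 2 →
      b * (a ^ m * b * (a ^ m)⁻¹) = (a ^ m * b * (a ^ m)⁻¹) * b := by
    intro m h1 h2
    set y := a ^ m * b * (a ^ m)⁻¹ with hy_def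
    have hy : y * y = 1 := by
      have : y * y = a ^ m * (b * b) * (a ^ m)⁻¹ := by rw [hy_def]; group
      rw [this, hb2, mul_one, mul_inv_cancel]
    have h := hm m h1 h2
    rw [pow_two] at h
    have self_inv : ∀ x : G, x * x = 1 → x⁻¹ = x := by
      intro x hx
      calc x⁻¹ = x⁻¹ * (x * x) := by rw [hx, mul_one]
        _ = x := by group
    have h' : (b * y) * (b * y) = 1 := by
      rw [hy_def, show b * (a ^ m * b * (a ^ m)⁻¹) * (b * (a ^ m * b * (a ^ m)⁻¹)) =
        (b * a ^ m * b * (a ^ m)⁻¹) * (b * a ^ m * b * (a ^ m)⁻¹) from by group, h]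
    have hinv : (b * y)⁻¹ = b * y := self_inv _ h'
    rw [mul_inv_rev, self_inv _ hy, self_inv _ hb2] at hinv
    exact hinv.symm
  -- aba⁻¹ commutes with (a^i)⁻¹ b a^i for 1 ≤ i ≤ n-3
  have hcomm : ∀ i : ℕ, 1 ≤ i → i ≤ n - 3 →
      Commute (a * b * a⁻¹) ((a ^ i)⁻¹ * b * a ^ i) := by
    intro i h1 h2
    have E := hbm (i + 1) (by omega) (by omega)
    have h3 : a * b * a⁻¹ * ((a ^ i)⁻¹ * b * a ^ i) =
        (a ^ i)⁻¹ * ((a ^ (i + 1) * b * (a ^ (i + 1))⁻¹) * b) * a ^ i := by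
      rw [pow_succ]; group
    have h4 : ((a ^ i)⁻¹ * b * a ^ i) * (a * b * a⁻¹) =
        (a ^ i)⁻¹ * (b * (a ^ (i + 1) * b * (a ^ (i + 1))⁻¹)) * a ^ i := by
      rw [pow_succ]; group
    show _ * _ = _ * _
    rw [h3, h4, E]
  -- aba⁻¹ commutes with (a⁻¹b)^j a^j for j ≤ n-3
  have hX : ∀ j : ℕ, j ≤ n - 3 →
      Commute (a * b * a⁻¹) ((a⁻¹ * b) ^ j * a ^ j) := by
    intro j
    induction j with
    | zero => intro _; simp
    | succ j ih =>
      intro hj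
      have h1 := ih (by omega)
      have h2 := hcomm (j + 1) (by omega) (by omega)
      have hstep : (a⁻¹ * b) ^ (j + 1) * a ^ (j + 1) =
          ((a⁻¹ * b) ^ j * a ^ j) * ((a ^ (j + 1))⁻¹ * b * a ^ (j + 1)) := by
        rw [pow_succ (a⁻¹ * b) j]
        generalize (a⁻¹ * b) ^ j = X
        rw [pow_succ a j]
        group
      rw [hstep]
      exact h1.mul_right h2
  intro k hk1 hk2
  obtain ⟨m, hm2⟩ : ∃ m, n - k = m + 2 := ⟨n - k - 2, by omega⟩
  rw [show n - k - 2 = m from by omega, show n - k - 1 = m + 1 from by omega, hm2]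
  have hc := hX (m + 1) (by omega)
  have hsplit : (a⁻¹ * b) ^ (m + 2) * a ^ (m + 2) * b * a⁻¹ =
      a⁻¹ * b * (((a⁻¹ * b) ^ (m + 1) * a ^ (m + 1)) * (a * b * a⁻¹)) := by
    rw [show m + 2 = (m + 1) + 1 from rfl, pow_succ' (a⁻¹ * b) (m + 1)]
    generalize (a⁻¹ * b) ^ (m + 1) = X
    rw [pow_succ a (m + 1)]
    group
  rw [hsplit, ← hc.eq]
  rw [pow_succ' (a⁻¹ * b) m]
  generalize (a⁻¹ * b) ^ m = X
  group
end

section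
/- Let n ≥ 1 and for i = 1, …, n let e_i = (1, 1, …, 1) − n·δ_i ∈ ℤⁿ, where δ_i is the i-th standard basis vector (so e_i has −(n−1) in position i and 1 elsewhere). A point x ∈ ℤⁿ has pairwise distinct coordinates modulo n if and only if there exist integers t₁, …, tₙ and a permutation π of {1, …, n} such that x = t₁e₁ + ⋯ + t_{n−1}e_{n−1} + tₙ·(1, 1, …, 1) + (π(1), π(2), …, π(n)). -/
/-!
Modulo `n` every `eᵢ` is congruent to `(1, …, 1)`, so the right-hand side is congruent to
`c·(1, …, 1) + (π(1), …, π(n))`, whose coordinates are distinct mod `n`. Conversely, if the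
residues of `x` are distinct, then `x - 1` runs through all residues, which defines `π` with
`x ≡ (π(1), …, π(n)) + 1`, so `x - π - 1 = n·s` for some `s ∈ ℤⁿ`. Such a vector lies in the
span of `e₁, …, e_{n-1}` and `(1, …, 1)`: `n·δᵢ = (1, …, 1) - eᵢ`, and `∑ᵢ eᵢ = 0` eliminates `eₙ`.
-/

/-- For `i ∈ {1, …, n}`, the vector `eᵢ = (1, 1, …, 1) - n·δᵢ ∈ ℤⁿ`, which has
`-(n-1)` in position `i` and `1` elsewhere. -/
def eVec (n : ℕ) (i : Fin n) : Fin n → ℤ :=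
  (fun _ => 1) - (n : ℤ) • Pi.single i 1

open Finset Function

namespace eVec

variable {n : ℕ}

theorem intCast_apply (i j : Fin n) : ((eVec n i j : ℤ) : ZMod n) = 1 := by
  simp [eVec]

theorem intCast_sum_smul_apply (F : Finset (Fin n)) (t : Fin n → ℤ) (j : Fin n) :
    (((∑ i ∈ F, t i • eVec n i) j : ℤ) : ZMod n) = ∑ i ∈ F, (t i : ZMod n) := by
  simp [Finset.sum_apply, intCast_apply]

theorem sum_eq_zero : ∑ i, eVec n i = 0 := by
  ext j
  simp [eVec, Finset.sum_apply, Pi.single_apply]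

theorem natCast_smul_single (i : Fin n) :
    (n : ℤ) • Pi.single i 1 = (fun _ => (1 : ℤ)) - eVec n i := by
  simp [eVec]

theorem natCast_smul_eq (s : Fin n → ℤ) (k : Fin n) :
    (n : ℤ) • s = ∑ i ∈ univ.erase k, (s k - s i) • eVec n i
      + (∑ i, s i) • (fun _ => (1 : ℤ)) := by
  have hs : (n : ℤ) • s = (∑ i, s i) • (fun _ => (1 : ℤ)) - ∑ i, s i • eVec n i := by
    conv_lhs => rw [← univ_sum_single s]
    have hsingle (i : Fin n) :
        (n : ℤ) • (Pi.single i (s i) : Fin n → ℤ) = s i • ((n : ℤ) • Pi.single i 1) := by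
      ext j; by_cases h : j = i <;> simp [h, mul_comm]
    simp_rw [smul_sum, hsingle, natCast_smul_single, smul_sub, sum_sub_distrib,
      sum_smul]
  have hk : ∑ i, s i • eVec n i = -∑ i ∈ univ.erase k, (s k - s i) • eVec n i := by
    rw [sum_erase _ (by simp), ← sum_neg_distrib]
    simp_rw [← neg_smul, neg_sub, sub_smul, sum_sub_distrib, ← smul_sum,
      sum_eq_zero, smul_zero, sub_zero]
  rw [hs, hk, sub_neg_eq_add, add_comm]

end eVec

theorem Fin.filter_val_lt_pred_eq_erase {n : ℕ} (k : Fin n) (hk : (k : ℕ) = n - 1) :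
    univ.filter (fun i : Fin n => (i : ℕ) < n - 1) = univ.erase k := by
  ext i
  simp only [mem_filter, mem_univ, true_and, mem_erase, ne_eq, Fin.ext_iff, hk, and_true]
  have := i.isLt
  omega

theorem ZMod.natCast_finVal_injective (n : ℕ) :
    Injective (fun i : Fin n => ((i : ℕ) : ZMod n)) := fun i j h => by
  have := congrArg ZMod.val h
  simp only [ZMod.val_cast_of_lt i.isLt, ZMod.val_cast_of_lt j.isLt] at this
  exact Fin.ext this

theorem ZMod.exists_perm_natCast_eq_of_injective {n : ℕ} [NeZero n] {f : Fin n → ZMod n}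
    (hf : Injective f) : ∃ π : Equiv.Perm (Fin n), ∀ i, ((π i : ℕ) : ZMod n) = f i := by
  have bij {g : Fin n → ZMod n} (hg : Injective g) : Bijective g :=
    (Fintype.bijective_iff_injective_and_card g).mpr ⟨hg, by simp⟩
  let e := Equiv.ofBijective _ (bij (ZMod.natCast_finVal_injective n))
  exact ⟨(Equiv.ofBijective f (bij hf)).trans e.symm, fun i => e.apply_symm_apply (f i)⟩

/-- A point `x ∈ ℤⁿ` has pairwise distinct coordinates modulo `n` if and only
if there exist integers `t₁, …, tₙ` and a permutation `π` of `{1, …, n}` such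
that `x = t₁e₁ + ⋯ + t_{n-1}e_{n-1} + tₙ·(1, …, 1) + (π(1), …, π(n))`
(the last summand being a vertex of the `(n-1)`-dimensional permutohedron). -/
theorem stmt_15 (n : ℕ) (hn : 1 ≤ n) (x : Fin n → ℤ) :
    Function.Injective (fun i : Fin n => ((x i : ZMod n))) ↔
      ∃ (t : Fin n → ℤ) (π : Equiv.Perm (Fin n)),
        x = (∑ i ∈ Finset.univ.filter (fun i : Fin n => (i : ℕ) < n - 1),
              t i • eVec n i)
            + t ⟨n - 1, by omega⟩ • (fun _ => (1 : ℤ))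
            + (fun i => ((π i : ℕ) : ℤ) + 1) := by
  have : NeZero n := ⟨by omega⟩
  set k : Fin n := ⟨n - 1, by omega⟩
  rw [Fin.filter_val_lt_pred_eq_erase k rfl]
  constructor
  · intro hx
    obtain ⟨π, hπ⟩ := ZMod.exists_perm_natCast_eq_of_injective
      ((add_left_injective (-1 : ZMod n)).comp hx)
    have hdvd (i : Fin n) : (n : ℤ) ∣ x i - (((π i : ℕ) : ℤ) + 1) := by
      rw [← ZMod.intCast_eq_intCast_iff_dvd_sub]
      push_cast
      rw [hπ i]
      simp
    choose s hs using hdvd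
    have hx : x = (n : ℤ) • s + fun i => ((π i : ℕ) : ℤ) + 1 := by
      ext i
      simp only [Pi.add_apply, Pi.smul_apply, smul_eq_mul, ← hs i, sub_add_cancel]
    refine ⟨update (fun i => s k - s i) k (∑ i, s i), π, ?_⟩
    rw [hx, eVec.natCast_smul_eq s k, update_self]
    congr 2
    exact sum_congr rfl fun i hi => by rw [update_of_ne (ne_of_mem_erase hi)]
  · rintro ⟨t, π, rfl⟩ a b hab
    have hres (j : Fin n) : (((∑ i ∈ univ.erase k, t i • eVec n i) + t k • (fun _ => (1 : ℤ))
        + (fun i => ((π i : ℕ) : ℤ) + 1) : Fin n → ℤ) j : ZMod n)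
        = ∑ i ∈ univ.erase k, (t i : ZMod n) + t k + (((π j : ℕ) : ZMod n) + 1) := by
      simp only [Pi.add_apply, Int.cast_add, eVec.intCast_sum_smul_apply]
      simp
    simp only [hres, add_right_inj, add_left_inj] at hab
    exact π.injective (ZMod.natCast_finVal_injective n hab)
end
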